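/- Let G be a finite F-group with [G : Z(G)] = p^k for a prime p. If [Z(C(x)) : Z(G)] = p^m for all non-central x ∈ G, then the number of distinct element centralizers of G equals (p^k − 1)/(p^m − 1) + 1. -/

import Mathlib

/-- The set of element centralizers of `G`. -/
def cent (G : Type*) [Group G] : Set (Subgroup G) :=
  Set.range fun x : G => Subgroup.centralizer {x}

/-- The number of distinct element centralizers of `G`. -/
noncomputable def numCent (G : Type*) [Group G] : ℕ := (cent G).ncard

/-- The center of the centralizer `C(x)`, viewed as a subgroup of `G`. -/
def centerCentralizer {G : Type*} [Group G] (x : G) : Subgroup G :=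
  Subgroup.centralizer {x} ⊓
    Subgroup.centralizer ((Subgroup.centralizer {x} : Subgroup G) : Set G)

/-- `G` is an F-group: for non-central `x, y`, `C(x) ≤ C(y)` implies `C(x) = C(y)`. -/
def IsFGroup (G : Type*) [Group G] : Prop :=
  ∀ x y : G, x ∉ Subgroup.center G → y ∉ Subgroup.center G →
    Subgroup.centralizer {x} ≤ Subgroup.centralizer {y} →
    Subgroup.centralizer ({x} : Set G) = Subgroup.centralizer {y}

/-- The set of conjugates of a subgroup `H` of `G`. -/
def conjugates {G : Type*} [Group G] (H : Subgroup G) : Set (Subgroup G) :=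
  {K | ∃ g : G, K = Subgroup.map (MulAut.conj g).toMonoidHom H}

/-- The number of `z`-classes of `G`: elements are `z`-equivalent when their
centralizers are conjugate in `G`, so the number of `z`-classes is the number of
distinct conjugacy classes of element centralizers. -/
noncomputable def numZClasses (G : Type*) [Group G] : ℕ :=
  (Set.range fun x : G => conjugates (Subgroup.centralizer {x})).ncard

/-! In an F-group, `y ∈ Z(C(x))` iff `C(x) ≤ C(y)`, so for non-central `x` the non-central
elements with centralizer `C(x)` are exactly `Z(C(x)) \ Z(G)`, a set of `|Z(G)| (p^m - 1)`
elements. These sets partition the `|Z(G)| (p^k - 1)` non-central elements, so there are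
`(p^k - 1) / (p^m - 1)` centralizers of non-central elements, and the centralizer `G` of the
central ones adds one more. -/

theorem Set.ncard_eq_ncard_image_mul {α β : Type*} {f : α → β} {s : Set α} {c : ℕ}
    (hs : s.Finite) (hc : ∀ b ∈ f '' s, {a ∈ s | f a = b}.ncard = c) :
    s.ncard = (f '' s).ncard * c := by
  classical
  obtain ⟨t, rfl⟩ := hs.exists_finset_coe
  rw [← Finset.coe_image, ncard_coe_finset, ncard_coe_finset, Finset.card_eq_sum_card_image f t,
    Finset.sum_const_nat]
  intro b hb
  rw [← hc b (by simpa using hb), ← ncard_coe_finset, Finset.coe_filter]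
  rfl

namespace Subgroup

variable {G : Type*} [Group G]

theorem card_mul_relIndex {H K : Subgroup G} (h : H ≤ K) :
    Nat.card H * H.relIndex K = Nat.card K := by
  rw [← relIndex_bot_left, ← relIndex_bot_left, relIndex_mul_relIndex _ _ _ bot_le h]

theorem ncard_coe_sdiff {H K : Subgroup G} [Finite H] (h : H ≤ K) :
    ((K : Set G) \ H).ncard = Nat.card H * (H.relIndex K - 1) := by
  rw [Set.ncard_sdiff h, ← Nat.card_coe_set_eq, ← Nat.card_coe_set_eq, Nat.mul_sub_one,
    card_mul_relIndex h]
  rfl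

end Subgroup

open Subgroup

section FGroup

variable {G : Type*} [Group G]

theorem mem_centerCentralizer_iff {x y : G} :
    y ∈ centerCentralizer x ↔ centralizer {x} ≤ centralizer {y} := by
  simp only [centerCentralizer, mem_inf, SetLike.le_def, mem_centralizer_iff, SetLike.mem_coe,
    Set.mem_singleton_iff, forall_eq]
  exact ⟨fun h g hg => (h.2 g hg).symm, fun h => ⟨(h rfl).symm, fun g hg => (h hg).symm⟩⟩

theorem center_le_centerCentralizer (x : G) : center G ≤ centerCentralizer x :=
  le_inf (center_le_centralizer _) (center_le_centralizer _)

theorem one_lt_relIndex_centerCentralizer [Finite G] {x : G} (hx : x ∉ center G) :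
    1 < (center G).relIndex (centerCentralizer x) := by
  have h0 : 0 < (center G).relIndex (centerCentralizer x) :=
    Nat.pos_of_dvd_of_pos (relIndex_dvd_card _ _) Nat.card_pos
  have h1 : (center G).relIndex (centerCentralizer x) ≠ 1 := fun h =>
    hx (relIndex_eq_one.1 h (mem_centerCentralizer_iff.2 le_rfl))
  omega

theorem centralizer_singleton_eq_top_iff {x : G} :
    centralizer ({x} : Set G) = ⊤ ↔ x ∈ center G := by
  rw [centralizer_eq_top_iff_subset, Set.singleton_subset_iff, SetLike.mem_coe]

variable (G) in
abbrev noncentralCent : Set (Subgroup G) :=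
  (fun x => centralizer {x}) '' (center G : Set G)ᶜ

theorem cent_eq_insert_top : cent G = insert ⊤ (noncentralCent G) := by
  ext K
  constructor
  · rintro ⟨x, rfl⟩
    by_cases hx : x ∈ center G
    · exact Or.inl (centralizer_singleton_eq_top_iff.2 hx)
    · exact Or.inr ⟨x, hx, rfl⟩
  · rintro (rfl | ⟨x, -, rfl⟩)
    · exact ⟨1, centralizer_singleton_eq_top_iff.2 (one_mem _)⟩
    · exact ⟨x, rfl⟩

theorem numCent_eq_ncard_add_one [Finite G] : numCent G = (noncentralCent G).ncard + 1 := by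
  rw [numCent, cent_eq_insert_top, Set.ncard_insert_of_notMem _ ((Set.toFinite _).image _)]
  rintro ⟨x, hx, h⟩
  exact hx (centralizer_singleton_eq_top_iff.1 h)

namespace IsFGroup

theorem setOf_centralizer_eq (hF : IsFGroup G) {x : G} (hx : x ∉ center G) :
    {y ∈ (center G : Set G)ᶜ | centralizer {y} = centralizer {x}} =
      (centerCentralizer x : Set G) \ center G := by
  ext y
  simp only [Set.mem_ofPred_eq, Set.mem_compl_iff, Set.mem_sdiff, SetLike.mem_coe,
    mem_centerCentralizer_iff]
  exact ⟨fun ⟨hy, h⟩ => ⟨h.ge, hy⟩, fun ⟨h, hy⟩ => ⟨hy, (hF x y hx hy h).symm⟩⟩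

theorem ncard_mul_relIndex_sub_one [Finite G] (hF : IsFGroup G) {n : ℕ}
    (hn : ∀ x : G, x ∉ center G → (center G).relIndex (centerCentralizer x) = n) :
    (noncentralCent G).ncard * (n - 1) = (center G).index - 1 := by
  have hfiber : ∀ K ∈ noncentralCent G,
      {y ∈ (center G : Set G)ᶜ | centralizer {y} = K}.ncard = Nat.card (center G) * (n - 1) := by
    rintro _ ⟨x, hx, rfl⟩
    rw [hF.setOf_centralizer_eq hx, ncard_coe_sdiff (center_le_centerCentralizer x), hn x hx]
  have hcompl : ((center G : Set G)ᶜ).ncard = Nat.card (center G) * ((center G).index - 1) := by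
    rw [Set.compl_eq_univ_sdiff, ← coe_top, ncard_coe_sdiff le_top, relIndex_top_right]
  refine Nat.eq_of_mul_eq_mul_left (Nat.card_pos (α := center G)) ?_
  rw [← hcompl, Set.ncard_eq_ncard_image_mul (Set.toFinite _) hfiber, Nat.mul_left_comm]

end IsFGroup

end FGroup

theorem stmt5_general (G : Type*) [Group G] [Finite G] (hF : IsFGroup G)
    (p k m : ℕ) (hk : (Subgroup.center G).index = p ^ k)
    (hm : ∀ x : G, x ∉ Subgroup.center G →
      (Subgroup.center G).relIndex (centerCentralizer x) = p ^ m) :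
    numCent G = (p ^ k - 1) / (p ^ m - 1) + 1 := by
  have key := hF.ncard_mul_relIndex_sub_one hm
  rw [hk] at key
  rw [numCent_eq_ncard_add_one]
  rcases (noncentralCent G).eq_empty_or_nonempty with h | ⟨_, x, hx, rfl⟩
  · rw [h, Set.ncard_empty, zero_mul] at key
    rw [h, ← key, Set.ncard_empty, Nat.zero_div]
  · have hpm : 1 < p ^ m := hm x hx ▸ one_lt_relIndex_centerCentralizer hx
    rw [← key, Nat.mul_div_cancel _ (by omega)]

theorem stmt5 (G : Type*) [Group G] [Finite G] (hF : IsFGroup G)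
    (p k m : ℕ) (hp : p.Prime) (hk : (Subgroup.center G).index = p ^ k)
    (hm : ∀ x : G, x ∉ Subgroup.center G →
      (Subgroup.center G).relIndex (centerCentralizer x) = p ^ m) :
    numCent G = (p ^ k - 1) / (p ^ m - 1) + 1 :=
  stmt5_general G hF p k m hk hm
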